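/- Let σ : M_5 → M_5 be the ℤ-linear map determined by σ(H) = 3H − 2Q_1 − Q_2 − Q_3 − Q_4 − Q_5, σ(Q_1) = 2H − Q_1 − Q_2 − Q_3 − Q_4 − Q_5, and σ(Q_i) = H − Q_1 − Q_i for i = 2, 3, 4, 5. Then σ is an involution preserving the bilinear form with σ(k) = k, and the numbers of σ-fixed elements in the Del Pezzo sets are: exactly 0 fixed elements in R_5, exactly 0 fixed elements in E_5, and exactly 2 fixed elements in G_5. -/

import Mathlib

/-- The Del Pezzo lattice of rank `1 + r`: `ℤ`-vectors with coordinates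
`(H, Q_1, …, Q_r)`; coordinate `0` is the coefficient of `H` and coordinate
`i.succ` is the coefficient of `Q_i`. -/
abbrev DP (r : ℕ) := Fin (r + 1) → ℤ

/-- The bilinear form: `⟨H,H⟩ = 1`, `⟨Q_i,Q_i⟩ = -1`, other products of
distinct basis vectors vanish. -/
def dpForm {r : ℕ} (v w : DP r) : ℤ :=
  v 0 * w 0 - ∑ i : Fin r, v i.succ * w i.succ

/-- The canonical class `k = -3H + Q_1 + ⋯ + Q_r`. -/
def dpK (r : ℕ) : DP r := fun i => if i.val = 0 then -3 else 1

/-- The root set `R_r = {m : ⟨m,k⟩ = 0, ⟨m,m⟩ = -2}`. -/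
def RSet (r : ℕ) : Set (DP r) := {m | dpForm m (dpK r) = 0 ∧ dpForm m m = -2}

/-- The Del Pezzo one-set `E_r = {m : ⟨m,k⟩ = -1, ⟨m,m⟩ = -1}`. -/
def ESet (r : ℕ) : Set (DP r) := {m | dpForm m (dpK r) = -1 ∧ dpForm m m = -1}

/-- The Del Pezzo two-set `G_r = {m : ⟨m,k⟩ = -2, ⟨m,m⟩ = 0}`. -/
def GSet (r : ℕ) : Set (DP r) := {m | dpForm m (dpK r) = -2 ∧ dpForm m m = 0}

/-- The vector in the Del Pezzo lattice whose coordinates (w.r.t. `H, Q_1, …, Q_r`)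
are given by the list `l` (padded with zeros). -/
def ofCoeffs {r : ℕ} (l : List ℤ) : DP r := fun i => l.getD i.val 0

/-! Writing `σ` as the matrix `d4Matrix`, whose columns are the prescribed images of
`H, Q₁, …, Q₅`, the involution, isometry and `σ k = k` claims are finite matrix identities.
The fixed sublattice of `σ` is `ℤu ⊕ ℤw` with `u = H - Q₁`, `w = 2H - Q₂ - Q₃ - Q₄ - Q₅`; as
`⟨u,u⟩ = ⟨w,w⟩ = 0`, `⟨u,w⟩ = 2` and `⟨u,k⟩ = ⟨w,k⟩ = -2`, the vector `m = xu + yw` has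
`⟨m,m⟩ = 4xy` and `⟨m,k⟩ = -2(x + y)`. Hence `⟨m,k⟩` is never `-1`, a fixed root would need
`4xy = -2`, and a fixed element of `G₅` needs `x + y = 1`, `xy = 0`, leaving exactly `u` and `w`. -/

open Matrix

def dpGram (r : ℕ) : Matrix (Fin (r + 1)) (Fin (r + 1)) ℤ :=
  diagonal fun i => if i = 0 then 1 else -1

lemma dpForm_eq_dotProduct_mulVec {r : ℕ} (v w : DP r) :
    dpForm v w = v ⬝ᵥ dpGram r *ᵥ w := by
  simp [dpForm, dpGram, dotProduct, mulVec_diagonal, Fin.sum_univ_succ, Fin.succ_ne_zero,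
    Finset.sum_neg_distrib, sub_eq_add_neg]

lemma dpForm_mulVec_mulVec {r : ℕ} {M : Matrix (Fin (r + 1)) (Fin (r + 1)) ℤ}
    (hM : Mᵀ * dpGram r * M = dpGram r) (v w : DP r) :
    dpForm (M *ᵥ v) (M *ᵥ w) = dpForm v w := by
  rw [dpForm_eq_dotProduct_mulVec, dpForm_eq_dotProduct_mulVec, ← vecMul_transpose,
    ← dotProduct_mulVec, mulVec_mulVec, mulVec_mulVec, hM]

lemma LinearMap.eq_toLin'_of_apply_single {R n : Type*} [CommSemiring R] [Fintype n]
    [DecidableEq n] (f : (n → R) →ₗ[R] n → R) (M : Matrix n n R)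
    (h : ∀ j, f (Pi.single j 1) = M.col j) : f = toLin' M :=
  LinearMap.pi_ext' fun j => LinearMap.ext_ring <| by simp [h]

def d4Matrix : Matrix (Fin 6) (Fin 6) ℤ :=
  !![ 3,  2,  1,  1,  1,  1;
     -2, -1, -1, -1, -1, -1;
     -1, -1, -1,  0,  0,  0;
     -1, -1,  0, -1,  0,  0;
     -1, -1,  0,  0, -1,  0;
     -1, -1,  0,  0,  0, -1]

lemma d4Matrix_mul_self : d4Matrix * d4Matrix = 1 := by decide

lemma d4Matrix_transpose_mul_dpGram_mul : d4Matrixᵀ * dpGram 5 * d4Matrix = dpGram 5 := by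
  decide

lemma d4Matrix_mulVec_dpK : d4Matrix *ᵥ dpK 5 = dpK 5 := by decide

def d4U : DP 5 := ![1, -1, 0, 0, 0, 0]

def d4W : DP 5 := ![2, 0, -1, -1, -1, -1]

def d4Fixed (x y : ℤ) : DP 5 := x • d4U + y • d4W

lemma d4Matrix_mulVec_eq_self_iff (m : DP 5) :
    d4Matrix *ᵥ m = m ↔ ∃ x y, d4Fixed x y = m := by
  constructor
  · intro h
    have h2 := congrFun h 2
    have h3 := congrFun h 3
    have h4 := congrFun h 4
    have h5 := congrFun h 5
    simp only [d4Matrix, mulVec, dotProduct, Fin.sum_univ_six, of_apply, cons_val,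
      cons_val_zero, cons_val_one] at h2 h3 h4 h5
    refine ⟨-m 1, -m 2, funext fun i => ?_⟩
    fin_cases i <;>
      simp only [d4Fixed, d4U, d4W, Pi.add_apply, Pi.smul_apply, smul_eq_mul, Fin.zero_eta,
        Fin.mk_one, Fin.reduceFinMk, cons_val, cons_val_zero, cons_val_one] <;>
      omega
  · rintro ⟨x, y, rfl⟩
    have hu : d4Matrix *ᵥ d4U = d4U := by decide
    have hw : d4Matrix *ᵥ d4W = d4W := by decide
    rw [d4Fixed, mulVec_add, mulVec_smul, mulVec_smul, hu, hw]

lemma dpForm_d4Fixed_self (x y : ℤ) : dpForm (d4Fixed x y) (d4Fixed x y) = 4 * x * y := by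
  have huu : d4U ⬝ᵥ dpGram 5 *ᵥ d4U = 0 := by decide
  have huw : d4U ⬝ᵥ dpGram 5 *ᵥ d4W = 2 := by decide
  have hwu : d4W ⬝ᵥ dpGram 5 *ᵥ d4U = 2 := by decide
  have hww : d4W ⬝ᵥ dpGram 5 *ᵥ d4W = 0 := by decide
  simp only [dpForm_eq_dotProduct_mulVec, d4Fixed, mulVec_add, mulVec_smul, dotProduct_add,
    add_dotProduct, dotProduct_smul, smul_dotProduct, smul_eq_mul, huu, huw, hwu, hww]
  ring

lemma dpForm_d4Fixed_dpK (x y : ℤ) : dpForm (d4Fixed x y) (dpK 5) = -2 * (x + y) := by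
  have hu : d4U ⬝ᵥ dpGram 5 *ᵥ dpK 5 = -2 := by decide
  have hw : d4W ⬝ᵥ dpGram 5 *ᵥ dpK 5 = -2 := by decide
  simp only [dpForm_eq_dotProduct_mulVec, d4Fixed, add_dotProduct, smul_dotProduct,
    smul_eq_mul, hu, hw]
  ring

lemma d4Matrix_fixed_levelSet_eq_image (a b : ℤ) :
    {m ∈ {m : DP 5 | dpForm m (dpK 5) = a ∧ dpForm m m = b} | d4Matrix *ᵥ m = m} =
      (fun p : ℤ × ℤ => d4Fixed p.1 p.2) '' {p | -2 * (p.1 + p.2) = a ∧ 4 * p.1 * p.2 = b} := by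
  ext m
  simp only [Set.mem_ofPred_eq, Set.mem_image, Prod.exists, d4Matrix_mulVec_eq_self_iff]
  constructor
  · rintro ⟨⟨hk, hm⟩, x, y, rfl⟩
    exact ⟨x, y, ⟨(dpForm_d4Fixed_dpK x y).symm.trans hk,
      (dpForm_d4Fixed_self x y).symm.trans hm⟩, rfl⟩
  · rintro ⟨x, y, ⟨hk, hm⟩, rfl⟩
    exact ⟨⟨(dpForm_d4Fixed_dpK x y).trans hk, (dpForm_d4Fixed_self x y).trans hm⟩, x, y, rfl⟩

lemma levelSet_zero_neg_two :
    {p : ℤ × ℤ | -2 * (p.1 + p.2) = 0 ∧ 4 * p.1 * p.2 = -2} = ∅ :=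
  Set.eq_empty_of_forall_notMem fun p ⟨_, hprod⟩ => by
    have : (4 : ℤ) ∣ -2 := ⟨p.1 * p.2, by rw [← hprod]; ring⟩
    omega

lemma levelSet_neg_one_neg_one :
    {p : ℤ × ℤ | -2 * (p.1 + p.2) = -1 ∧ 4 * p.1 * p.2 = -1} = ∅ :=
  Set.eq_empty_of_forall_notMem fun p ⟨hsum, _⟩ => by omega

lemma levelSet_neg_two_zero :
    {p : ℤ × ℤ | -2 * (p.1 + p.2) = -2 ∧ 4 * p.1 * p.2 = 0} = {(1, 0), (0, 1)} := by
  ext ⟨x, y⟩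
  simp only [Set.mem_ofPred_eq, Set.mem_insert_iff, Set.mem_singleton_iff, Prod.mk.injEq]
  constructor
  · rintro ⟨hsum, hprod⟩
    rcases mul_eq_zero.1 (show x * y = 0 by linarith) with rfl | rfl <;> omega
  · rintro (⟨rfl, rfl⟩ | ⟨rfl, rfl⟩) <;> norm_num

/-- The real structure on `M_5` of type `D4` (degree 4, e.g. a real torus):
counts of fixed elements in the Del Pezzo sets. -/
theorem realStructure_deg4_D4 (σ : (Fin 6 → ℤ) →ₗ[ℤ] (Fin 6 → ℤ))
    (hH : σ (Pi.single 0 1) = ofCoeffs [3, -2, -1, -1, -1, -1])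
    (hQ1 : σ (Pi.single 1 1) = ofCoeffs [2, -1, -1, -1, -1, -1])
    (hQ2 : σ (Pi.single 2 1) = ofCoeffs [1, -1, -1, 0, 0, 0])
    (hQ3 : σ (Pi.single 3 1) = ofCoeffs [1, -1, 0, -1, 0, 0])
    (hQ4 : σ (Pi.single 4 1) = ofCoeffs [1, -1, 0, 0, -1, 0])
    (hQ5 : σ (Pi.single 5 1) = ofCoeffs [1, -1, 0, 0, 0, -1]) :
    (∀ v : DP 5, σ (σ v) = v) ∧
    (∀ v w : DP 5, dpForm (σ v) (σ w) = dpForm v w) ∧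
    σ (dpK 5) = dpK 5 ∧
    {m ∈ RSet 5 | σ m = m}.ncard = 0 ∧
    {m ∈ ESet 5 | σ m = m}.ncard = 0 ∧
    {m ∈ GSet 5 | σ m = m}.ncard = 2 := by
  obtain rfl : σ = toLin' d4Matrix := σ.eq_toLin'_of_apply_single d4Matrix fun j => by
    fin_cases j
    exacts [hH.trans (by decide), hQ1.trans (by decide), hQ2.trans (by decide),
      hQ3.trans (by decide), hQ4.trans (by decide), hQ5.trans (by decide)]
  simp only [toLin'_apply]
  refine ⟨fun v => by rw [mulVec_mulVec, d4Matrix_mul_self, one_mulVec],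
    dpForm_mulVec_mulVec d4Matrix_transpose_mul_dpGram_mul, d4Matrix_mulVec_dpK, ?_, ?_, ?_⟩
  · rw [RSet, d4Matrix_fixed_levelSet_eq_image, levelSet_zero_neg_two, Set.image_empty,
      Set.ncard_empty]
  · rw [ESet, d4Matrix_fixed_levelSet_eq_image, levelSet_neg_one_neg_one, Set.image_empty,
      Set.ncard_empty]
  · rw [GSet, d4Matrix_fixed_levelSet_eq_image, levelSet_neg_two_zero, Set.image_pair,
      Set.ncard_pair (by decide)]
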